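/- arXiv:2303.01031 — 2 statements merged into one kernel-verified Lean document; each statement's English description precedes it below -/
import Mathlib

section
/- Let A be a p×p real symmetric positive definite matrix and E a p×p real symmetric matrix with max-entry norm ||E||_max ≤ ε, where λ_min(A) ≥ 2pε and ε > 0. Then A + E is invertible and ||(A+E)^{-1} - A^{-1}||_max ≤ (2p / λ_min(A)^2) · ε. -/
/-!
Only the quadratic form matters. Since `|xᵀ E x| ≤ ε ‖x‖₁² ≤ p ε ‖x‖₂²`, the matrix `A + E` is
coercive with constant `λ/2`, hence invertible. If `B` is coercive with constant `μ` and `x` is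
the `i`-th row of `B⁻¹`, then `xᵀ B x = x i ≤ ‖x‖₂`, so `‖x‖₂ ≤ 1/μ`. Finally
`(A+E)⁻¹ - A⁻¹ = -(A+E)⁻¹ E A⁻¹`, whose `(i, j)` entry is at most
`ε ‖row i of (A+E)⁻¹‖₁ ‖column j of A⁻¹‖₁ ≤ ε (√p · 2/λ) (√p · 1/λ)`.
-/

open Matrix

namespace Matrix

variable {m n : Type*} [Fintype m] [Fintype n]

open scoped MatrixOrder in
theorem IsHermitian.mul_dotProduct_self_le_dotProduct_mulVec [DecidableEq n] {A : Matrix n n ℝ}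
    (hA : A.IsHermitian) {μ : ℝ} (h : ∀ i, μ ≤ hA.eigenvalues i) (x : n → ℝ) :
    μ * (x ⬝ᵥ x) ≤ x ⬝ᵥ A *ᵥ x := by
  have hle : algebraMap ℝ (Matrix n n ℝ) μ ≤ A := by
    rw [algebraMap_le_iff_le_spectrum (ha := hA.isSelfAdjoint),
      hA.spectrum_real_eq_range_eigenvalues]
    rintro _ ⟨i, rfl⟩
    exact h i
  simpa [sub_mulVec, Algebra.algebraMap_eq_smul_one, smul_mulVec, dotProduct_smul] using
    (le_iff.1 hle).dotProduct_mulVec_nonneg x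

theorem dotProduct_self_nonneg (x : n → ℝ) : 0 ≤ x ⬝ᵥ x := by
  simpa using dotProduct_star_self_nonneg x

theorem sq_sum_abs_le_card_mul_dotProduct_self (x : n → ℝ) :
    (∑ k, |x k|) ^ 2 ≤ Fintype.card n * (x ⬝ᵥ x) := by
  simpa [dotProduct, sq] using sq_sum_le_card_mul_sum_sq (s := Finset.univ) (f := fun k => |x k|)

theorem abs_dotProduct_mulVec_le {E : Matrix m n ℝ} {ε : ℝ} (hE : ∀ i j, |E i j| ≤ ε)
    (x : m → ℝ) (y : n → ℝ) : |x ⬝ᵥ E *ᵥ y| ≤ ε * (∑ k, |x k|) * ∑ l, |y l| := by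
  calc |x ⬝ᵥ E *ᵥ y| = |∑ k, ∑ l, x k * E k l * y l| := by
        simp only [dotProduct, mulVec, Finset.mul_sum, mul_assoc]
    _ ≤ ∑ k, ∑ l, |x k| * ε * |y l| := by
        refine (Finset.abs_sum_le_sum_abs _ _).trans (Finset.sum_le_sum fun k _ => ?_)
        refine (Finset.abs_sum_le_sum_abs _ _).trans (Finset.sum_le_sum fun l _ => ?_)
        rw [abs_mul, abs_mul]
        gcongr
        exact hE k l
    _ = ε * (∑ k, |x k|) * ∑ l, |y l| := by
        rw [mul_assoc, Finset.sum_mul_sum, Finset.mul_sum]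
        refine Finset.sum_congr rfl fun k _ => ?_
        rw [Finset.mul_sum]
        exact Finset.sum_congr rfl fun l _ => by ring

theorem abs_mul_mul_apply_le {l : Type*} [Fintype l] {E : Matrix m n ℝ} {ε : ℝ}
    (hE : ∀ i j, |E i j| ≤ ε) (M : Matrix l m ℝ) (N : Matrix n l ℝ) (i j : l) :
    |(M * E * N) i j| ≤ ε * (∑ k, |M i k|) * ∑ k, |Nᵀ j k| := by
  have h : (M * E * N) i j = M i ⬝ᵥ E *ᵥ Nᵀ j := by
    rw [mul_apply', mul_apply_eq_vecMul, ← dotProduct_mulVec]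
    rfl
  exact h ▸ abs_dotProduct_mulVec_le hE _ _

theorem mul_dotProduct_self_le_dotProduct_add_mulVec {A E : Matrix n n ℝ} {μ ε : ℝ}
    (hA : ∀ x, μ * (x ⬝ᵥ x) ≤ x ⬝ᵥ A *ᵥ x) (hE : ∀ i j, |E i j| ≤ ε) (hε : 0 ≤ ε) (x : n → ℝ) :
    (μ - Fintype.card n * ε) * (x ⬝ᵥ x) ≤ x ⬝ᵥ (A + E) *ᵥ x := by
  have hEx : ε * (∑ k, |x k|) ^ 2 ≤ ε * (Fintype.card n * (x ⬝ᵥ x)) :=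
    mul_le_mul_of_nonneg_left (sq_sum_abs_le_card_mul_dotProduct_self x) hε
  have := neg_le_of_abs_le (abs_dotProduct_mulVec_le hE x x)
  rw [add_mulVec, dotProduct_add]
  nlinarith [hA x]

theorem isUnit_of_mul_dotProduct_self_le [DecidableEq n] {B : Matrix n n ℝ} {μ : ℝ} (hμ : 0 < μ)
    (hB : ∀ x, μ * (x ⬝ᵥ x) ≤ x ⬝ᵥ B *ᵥ x) : IsUnit B := by
  refine mulVec_injective_iff_isUnit.1 fun x y hxy => sub_eq_zero.1 ?_
  have hB0 := hB (x - y)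
  rw [mulVec_sub, hxy, sub_self, dotProduct_zero] at hB0
  exact dotProduct_self_eq_zero.1 <|
    le_antisymm (nonpos_of_mul_nonpos_right hB0 hμ) (dotProduct_self_nonneg _)

theorem dotProduct_self_inv_apply_le [DecidableEq n] {B : Matrix n n ℝ} {μ : ℝ} (hμ : 0 < μ)
    (hB : ∀ x, μ * (x ⬝ᵥ x) ≤ x ⬝ᵥ B *ᵥ x) (i : n) : B⁻¹ i ⬝ᵥ B⁻¹ i ≤ 1 / μ ^ 2 := by
  have hdet : IsUnit B.det := (isUnit_iff_isUnit_det B).1 (isUnit_of_mul_dotProduct_self_le hμ hB)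
  set x := B⁻¹ i
  have hxB : x ᵥ* B = Pi.single i 1 := by
    rw [← mul_apply_eq_vecMul, nonsing_inv_mul _ hdet]
    ext j
    simp [one_apply, Pi.single_apply, eq_comm]
  have hμx : μ * (x ⬝ᵥ x) ≤ x i := by
    simpa [dotProduct_mulVec, hxB, single_dotProduct] using hB x
  have hxi : x i * x i ≤ x ⬝ᵥ x :=
    Finset.single_le_sum (f := fun k => x k * x k) (fun k _ => mul_self_nonneg _)
      (Finset.mem_univ i)
  rw [le_div_iff₀ (by positivity)]
  rcases (dotProduct_self_nonneg x).eq_or_lt with hx | hx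
  · rw [← hx]; norm_num
  · nlinarith [mul_self_le_mul_self (by positivity) hμx]

theorem sq_sum_abs_inv_apply_le [DecidableEq n] {B : Matrix n n ℝ} {μ : ℝ} (hμ : 0 < μ)
    (hB : ∀ x, μ * (x ⬝ᵥ x) ≤ x ⬝ᵥ B *ᵥ x) (i : n) :
    (∑ k, |B⁻¹ i k|) ^ 2 ≤ Fintype.card n / μ ^ 2 := by
  calc (∑ k, |B⁻¹ i k|) ^ 2 ≤ Fintype.card n * (B⁻¹ i ⬝ᵥ B⁻¹ i) :=
        sq_sum_abs_le_card_mul_dotProduct_self _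
    _ ≤ Fintype.card n * (1 / μ ^ 2) := by gcongr; exact dotProduct_self_inv_apply_le hμ hB i
    _ = Fintype.card n / μ ^ 2 := by ring

theorem isUnit_add_and_abs_inv_add_sub_inv_apply_le [DecidableEq n] {A E : Matrix n n ℝ}
    {μ ε : ℝ} (hμ : 0 < μ) (hA : ∀ x, μ * (x ⬝ᵥ x) ≤ x ⬝ᵥ A *ᵥ x)
    (hE : ∀ i j, |E i j| ≤ ε) (hε : 0 ≤ ε) (hgap : 2 * Fintype.card n * ε ≤ μ) :
    IsUnit (A + E) ∧
      ∀ i j, |(A + E)⁻¹ i j - A⁻¹ i j| ≤ 2 * Fintype.card n / μ ^ 2 * ε := by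
  have hAE : ∀ x, μ / 2 * (x ⬝ᵥ x) ≤ x ⬝ᵥ (A + E) *ᵥ x := fun x =>
    (mul_le_mul_of_nonneg_right (by linarith) (dotProduct_self_nonneg x)).trans
      (mul_dotProduct_self_le_dotProduct_add_mulVec hA hE hε x)
  have hAT : ∀ x, μ * (x ⬝ᵥ x) ≤ x ⬝ᵥ Aᵀ *ᵥ x := fun x =>
    (dotProduct_transpose_mulVec A x x).symm ▸ hA x
  have hAE_unit := isUnit_of_mul_dotProduct_self_le (half_pos hμ) hAE
  have hdiff : (A + E)⁻¹ - A⁻¹ = -((A + E)⁻¹ * E * A⁻¹) := by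
    rw [inv_sub_inv (iff_of_true hAE_unit (isUnit_of_mul_dotProduct_self_le hμ hA)),
      sub_add_cancel_left, mul_neg, neg_mul]
  refine ⟨hAE_unit, fun i j => ?_⟩
  have hrow := sq_sum_abs_inv_apply_le (half_pos hμ) hAE i
  have hcol := sq_sum_abs_inv_apply_le hμ hAT j
  rw [← sub_apply, hdiff, neg_apply, abs_neg]
  refine (abs_mul_mul_apply_le hE _ _ i j).trans ?_
  rw [transpose_nonsing_inv, mul_assoc, mul_comm _ ε]
  gcongr
  refine (sq_le_sq₀ (by positivity) (by positivity)).1 ?_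
  calc ((∑ k, |(A + E)⁻¹ i k|) * ∑ k, |Aᵀ⁻¹ j k|) ^ 2
      ≤ Fintype.card n / (μ / 2) ^ 2 * (Fintype.card n / μ ^ 2) := by
        rw [mul_pow]; gcongr
    _ = (2 * Fintype.card n / μ ^ 2) ^ 2 := by field_simp

end Matrix

theorem stmt3_general {p : ℕ} (A E : Matrix (Fin p) (Fin p) ℝ) (ε lam : ℝ)
    (hA : A.PosDef) (hAher : A.IsHermitian)
    (hlam : IsLeast (Set.range hAher.eigenvalues) lam)
    (hEmax : ∀ i j, |E i j| ≤ ε)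
    (hε : 0 < ε) (hgap : 2 * p * ε ≤ lam) :
    IsUnit (A + E) ∧
      ∀ i j, |(A + E)⁻¹ i j - A⁻¹ i j| ≤ 2 * p / lam ^ 2 * ε := by
  obtain ⟨i₀, hi₀⟩ := hlam.1
  have hlam_pos : 0 < lam := hi₀ ▸ hA.eigenvalues_pos i₀
  have hcoercive : ∀ x, lam * (x ⬝ᵥ x) ≤ x ⬝ᵥ A *ᵥ x :=
    hAher.mul_dotProduct_self_le_dotProduct_mulVec fun i => hlam.2 ⟨i, rfl⟩
  simpa using isUnit_add_and_abs_inv_add_sub_inv_apply_le hlam_pos hcoercive hEmax hε.le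
    (by simpa using hgap)

/-- matrix inverse perturbation, Lemma 7 of the paper.
If `A` is symmetric positive definite with smallest eigenvalue `lam ≥ 2pε`, and `E` is symmetric
with `‖E‖_max ≤ ε` (`ε > 0`), then `A + E` is invertible and
`‖(A+E)⁻¹ - A⁻¹‖_max ≤ (2p / lam²) ε`. -/
theorem stmt3 {p : ℕ} (A E : Matrix (Fin p) (Fin p) ℝ) (ε lam : ℝ)
    (hA : A.PosDef) (hAher : A.IsHermitian)
    (hlam : IsLeast (Set.range hAher.eigenvalues) lam)
    (hE : Eᵀ = E) (hEmax : ∀ i j, |E i j| ≤ ε)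
    (hε : 0 < ε) (hgap : 2 * p * ε ≤ lam) :
    IsUnit (A + E) ∧
      ∀ i j, |(A + E)⁻¹ i j - A⁻¹ i j| ≤ 2 * p / lam ^ 2 * ε :=
  stmt3_general A E ε lam hA hAher hlam hEmax hε hgap
end

section
/- Let S be a p×p symmetric matrix and μ > 0, M a p×p symmetric matrix, and set R = μM - S. If Θ = (R + sqrt(R^2 + 4μ I_p)) / (2μ), where sqrt denotes the symmetric positive definite square root of the positive definite matrix R^2 + 4μ I_p, then Θ is symmetric positive definite and satisfies Θ^{-1} = S + μΘ - μM, i.e., Θ is a stationary point of Θ ↦ -log det Θ + tr(ΘS) + (μ/2)||Θ - M||_F^2. -/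
/-!
Since `Q = √(Q * Q)` and `Q * Q = R * R + 4μ I` commutes with `R`, so does `Q`; hence
`(Q - R)(R + Q) = Q² - R² = 4μ I`, which gives `Θ⁻¹ = (Q - R) / 2 = S + μΘ - μM`.
For positivity, if `(R + Q) v = λ v` then `λ (Q - R) v = 4μ v`, so
`λ ⟪v, 2Q v⟫ = (λ² + 4μ) ‖v‖² > 0` forces `λ > 0`.
-/

open Matrix

open scoped MatrixOrder ComplexOrder in
theorem Matrix.PosSemidef.commute_of_commute_mul_self {n 𝕜 : Type*} [Fintype n] [DecidableEq n]
    [RCLike 𝕜] {A B : Matrix n n 𝕜} (hA : A.PosSemidef) (h : Commute (A * A) B) :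
    Commute A B := by
  rw [← CFC.sqrt_mul_self A hA.nonneg]
  exact h.cfcₙ_nnreal _

theorem Matrix.IsHermitian.posDef_of_mul_eq_smul_one {n : Type*} [Fintype n] [DecidableEq n]
    {A B : Matrix n n ℝ} {c : ℝ} (hA : A.IsHermitian) (hc : 0 < c) (hBA : B * A = c • 1)
    (hAB : (A + B).PosDef) : A.PosDef := by
  rw [hA.posDef_iff_eigenvalues_pos]
  intro i
  set v : n → ℝ := ⇑(hA.eigenvectorBasis i)
  set l := hA.eigenvalues i
  have hv : v ≠ 0 := by simpa [v] using hA.eigenvectorBasis.orthonormal.ne_zero i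
  have hAv : A *ᵥ v = l • v := hA.mulVec_eigenvectorBasis i
  have hBv : l • (B *ᵥ v) = c • v := by
    rw [← mulVec_smul, ← hAv, mulVec_mulVec, hBA, smul_mulVec, one_mulVec]
  have hform : l * (v ⬝ᵥ (A + B) *ᵥ v) = (l ^ 2 + c) * (v ⬝ᵥ v) := by
    rw [add_mulVec, dotProduct_add, mul_add, ← smul_eq_mul l (v ⬝ᵥ B *ᵥ v), ← dotProduct_smul,
      hBv, hAv]
    simp only [dotProduct_smul, smul_eq_mul]; ring
  have hq : 0 < v ⬝ᵥ (A + B) *ᵥ v := by simpa using hAB.dotProduct_mulVec_pos hv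
  have hvv : 0 < v ⬝ᵥ v := by simpa using dotProduct_star_self_pos_iff.mpr hv
  exact (pos_iff_pos_of_mul_pos (hform ▸ by positivity)).mpr hq

/-- ADMM Θ-step. Let `S, M` be symmetric `p × p` matrices, `μ > 0`,
`R = μM - S`, and let `Q` be the symmetric positive definite square root of `R² + 4μI`
(i.e. `Q` positive definite with `Q * Q = R * R + 4μ • I`). Then `Θ = (R + Q) / (2μ)` is
symmetric positive definite and satisfies the stationarity condition
`Θ⁻¹ = S + μΘ - μM` of `Θ ↦ -log det Θ + tr(ΘS) + (μ/2)‖Θ - M‖_F²`. -/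
theorem stmt15 {p : ℕ} (S M : Matrix (Fin p) (Fin p) ℝ)
    (hS : Sᵀ = S) (hM : Mᵀ = M) (μ : ℝ) (hμ : 0 < μ)
    (R : Matrix (Fin p) (Fin p) ℝ) (hR : R = μ • M - S)
    (Q : Matrix (Fin p) (Fin p) ℝ) (hQpd : Q.PosDef)
    (hQsq : Q * Q = R * R + (4 * μ) • (1 : Matrix (Fin p) (Fin p) ℝ))
    (Θ : Matrix (Fin p) (Fin p) ℝ) (hΘ : Θ = (2 * μ)⁻¹ • (R + Q)) :
    Θᵀ = Θ ∧ Θ.PosDef ∧ Θ⁻¹ = S + μ • Θ - μ • M := by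
  have hRH : R.IsHermitian := by
    rw [IsHermitian, conjTranspose_eq_transpose_of_trivial, hR, transpose_sub, transpose_smul,
      hM, hS]
  have hQR : Commute Q R := hQpd.posSemidef.commute_of_commute_mul_self <| by
    rw [hQsq]
    exact ((Commute.refl R).mul_left (.refl R)).add_left ((Commute.one_left R).smul_left _)
  have hfactor : (Q - R) * (R + Q) = (4 * μ) • 1 := by
    rw [add_comm, ← hQR.mul_self_sub_mul_self_eq', hQsq, add_sub_cancel_left]
  have hRQ : (R + Q).PosDef := (hRH.add hQpd.isHermitian).posDef_of_mul_eq_smul_one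
    (by positivity) hfactor (by convert hQpd.add hQpd using 1; abel)
  have hΘpd : Θ.PosDef := hΘ ▸ hRQ.smul (by positivity)
  have hΘinv : Θ⁻¹ = (2 : ℝ)⁻¹ • (Q - R) := by
    refine inv_eq_left_inv ?_
    rw [hΘ, smul_mul_smul, hfactor, smul_smul,
      show 2⁻¹ * (2 * μ)⁻¹ * (4 * μ) = (1 : ℝ) by field_simp; ring, one_smul]
  refine ⟨by simpa [conjTranspose_eq_transpose_of_trivial] using hΘpd.isHermitian.eq, hΘpd,
    ?_⟩
  rw [hΘinv, hΘ, hR, smul_smul, show μ * (2 * μ)⁻¹ = 2⁻¹ by field_simp]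
  module
end
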